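/- Let D be a finite loopless source-free directed graph and let K be an inward dominated quasi-kernel of D. If u ∈ K has no external private out-neighbor with regard to K, then K − {u} is a quasi-kernel of D. -/

import Mathlib

/-- A set is independent in the digraph with arc relation `A` if no two of its
vertices are connected by an arc in either direction. -/
def Independent {V : Type*} (A : V → V → Prop) (S : Set V) : Prop :=
  ∀ u ∈ S, ∀ v ∈ S, ¬ A u v

/-- A kernel: an independent set such that every vertex outside it has an
ingoing arc from the set. -/
def IsKernel {V : Type*} (A : V → V → Prop) (K : Set V) : Prop :=
  Independent A K ∧ ∀ v ∉ K, ∃ u ∈ K, A u v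

/-- A quasi-kernel: an independent set from which every vertex is reachable
in at most two steps. -/
def IsQuasiKernel {V : Type*} (A : V → V → Prop) (Q : Set V) : Prop :=
  Independent A Q ∧
    ∀ v : V, v ∈ Q ∨ (∃ u ∈ Q, A u v) ∨ (∃ u ∈ Q, ∃ w : V, A u w ∧ A w v)

/-- A set `Q` is inward dominated if every arc entering `Q` from outside is
answered by an arc from `Q` to its tail. -/
def InwardDominated {V : Type*} (A : V → V → Prop) (Q : Set V) : Prop :=
  ∀ w ∈ Q, ∀ v ∉ Q, A v w → ∃ u ∈ Q, A u v

/-- `v` is an external private out-neighbor (epon) of `u` with regard to `S`. -/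
def IsEpon {V : Type*} (A : V → V → Prop) (S : Set V) (u v : V) : Prop :=
  v ∉ S ∧ A u v ∧ ∀ w ∈ S, A w v → w = u

/-- `u` has an external private out-neighbor with regard to `S`. -/
def HasEpon {V : Type*} (A : V → V → Prop) (S : Set V) (u : V) : Prop :=
  ∃ v : V, IsEpon A S u v

/-- A digraph is source-free if every vertex has an ingoing arc. -/
def SourceFree {V : Type*} (A : V → V → Prop) : Prop :=
  ∀ v : V, ∃ u : V, A u v

/-!
Without an epon, every out-neighbour of `u` outside `K` has a second in-neighbour in `K`, so any
arc leaving `u` can be rerouted to leave from `K - {u}` instead. Vertices other than `u` keep their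
paths of length at most two this way. For `u` itself, source-freeness gives an in-neighbour `w`,
which lies outside `K` by independence; inward domination supplies an arc from `K` to `w`, and
rerouting it yields a path of length two from `K - {u}` to `u`.
-/

section

variable {V : Type*} {A : V → V → Prop} {S : Set V} {u v w x : V}

theorem Independent.mono {T : Set V} (hS : Independent A S) (hTS : T ⊆ S) : Independent A T :=
  fun a ha b hb => hS a (hTS ha) b (hTS hb)

theorem Independent.notMem_of_arc (hS : Independent A S) (hu : u ∈ S) (huv : A u v) : v ∉ S :=
  fun hv => hS u hu v hv huv

theorem exists_arc_from_diff_singleton_of_not_hasEpon (hnep : ¬ HasEpon A S u) (hw : w ∉ S)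
    (huw : A u w) : ∃ y ∈ S \ {u}, A y w := by
  by_contra! h
  exact hnep ⟨w, hw, huw, fun y hy hyw => by_contra fun hyu => h y ⟨hy, hyu⟩ hyw⟩

theorem Independent.exists_arc_from_diff_singleton (hS : Independent A S)
    (hnep : ¬ HasEpon A S u) (hx : x ∈ S) (hxw : A x w) : ∃ y ∈ S \ {u}, A y w := by
  by_cases hxu : x = u
  · subst hxu
    exact exists_arc_from_diff_singleton_of_not_hasEpon hnep (hS.notMem_of_arc hx hxw) hxw
  · exact ⟨x, ⟨hx, hxu⟩, hxw⟩

end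

theorem remove_no_epon_quasiKernel_general {V : Type*} (A : V → V → Prop)
    (hsf : SourceFree A) (K : Set V)
    (hK : IsQuasiKernel A K) (hid : InwardDominated A K) (u : V) (hu : u ∈ K)
    (hnep : ¬ HasEpon A K u) : IsQuasiKernel A (K \ {u}) := by
  obtain ⟨hind, hdom⟩ := hK
  have reroute {x w : V} (hx : x ∈ K) (hxw : A x w) : ∃ y ∈ K \ {u}, A y w :=
    hind.exists_arc_from_diff_singleton hnep hx hxw
  refine ⟨hind.mono Set.sdiff_subset, fun v => ?_⟩
  by_cases hvu : v = u
  · subst hvu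
    obtain ⟨w, hwv⟩ := hsf v
    obtain ⟨x, hx, hxw⟩ := hid v hu w (fun hw => hind.notMem_of_arc hw hwv hu) hwv
    obtain ⟨y, hy, hyw⟩ := reroute hx hxw
    exact .inr (.inr ⟨y, hy, w, hyw, hwv⟩)
  rcases hdom v with hvK | ⟨x, hx, hxv⟩ | ⟨x, hx, w, hxw, hwv⟩
  · exact .inl ⟨hvK, hvu⟩
  · obtain ⟨y, hy, hyv⟩ := reroute hx hxv
    exact .inr (.inl ⟨y, hy, hyv⟩)
  · obtain ⟨y, hy, hyw⟩ := reroute hx hxw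
    exact .inr (.inr ⟨y, hy, w, hyw, hwv⟩)

/-- In a source-free digraph, removing from an inward dominated quasi-kernel a
vertex with no epon leaves a quasi-kernel. -/
theorem remove_no_epon_quasiKernel {V : Type*} [Fintype V] (A : V → V → Prop)
    (hirr : Irreflexive A) (hsf : SourceFree A) (K : Set V)
    (hK : IsQuasiKernel A K) (hid : InwardDominated A K) (u : V) (hu : u ∈ K)
    (hnep : ¬ HasEpon A K u) : IsQuasiKernel A (K \ {u}) :=
  remove_no_epon_quasiKernel_general A hsf K hK hid u hu hnep
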